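/- Fix natural numbers m and i ≤ m, a real a with 0 < a < 1, and define, for N > m, p(N) = 1 - (1 - a)^(1 / c_l(N)) where c_i(N) = binomial(N - m, m - i), and p_k(N) = 1 - (1 - p(N))^(c_k(N)). Then for any k > l (with k ≤ m), p_k(N) → 0 as N → ∞. -/

import Mathlib

open Filter Real

lemma tendsto_choose_atTop {d : ℕ} (hd : d ≠ 0) :
    Tendsto (fun n : ℕ => (n.choose d : ℝ)) atTop atTop :=
  (isEquivalent_choose d).symm.tendsto_atTop <|
    ((tendsto_pow_atTop hd).comp tendsto_natCast_atTop_atTop).atTop_div_const (by positivity)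

/-- The identity `C(n,s) C(s,r) = C(n,r) C(n-r,s-r)` turns the ratio into
`C(s,r) / C(n-r,s-r)`, whose denominator is unbounded. -/
lemma tendsto_choose_div_choose_nhds_zero {r s : ℕ} (hrs : r < s) :
    Tendsto (fun n : ℕ => (n.choose r : ℝ) / n.choose s) atTop (nhds 0) := by
  have hratio : (fun n : ℕ => (s.choose r : ℝ) / (n - r).choose (s - r)) =ᶠ[atTop]
      fun n : ℕ => (n.choose r : ℝ) / n.choose s := by
    filter_upwards [eventually_ge_atTop s] with n hn
    have hs : (n.choose s : ℝ) ≠ 0 := mod_cast (Nat.choose_pos hn).ne'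
    have hsr : ((n - r).choose (s - r) : ℝ) ≠ 0 :=
      mod_cast (Nat.choose_pos (Nat.sub_le_sub_right hn r)).ne'
    have hmul : (n.choose s : ℝ) * s.choose r = n.choose r * (n - r).choose (s - r) :=
      mod_cast Nat.choose_mul hrs.le
    rw [div_eq_div_iff hsr hs, mul_comm, hmul]
  refine Tendsto.congr' hratio (tendsto_const_nhds.div_atTop ?_)
  exact (tendsto_choose_atTop (Nat.sub_ne_zero_of_lt hrs)).comp (tendsto_sub_atTop_nat r)

theorem stmt_3_general (m l k : ℕ) (hlk : l < k) (hkm : k ≤ m)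
    (a : ℝ) (ha1 : a < 1) :
    Tendsto (fun N : ℕ =>
        1 - (1 - a) ^ (((N - m).choose (m - k) : ℝ) / ((N - m).choose (m - l) : ℝ)))
      atTop (nhds 0) := by
  have hexponent : Tendsto (fun N : ℕ =>
      ((N - m).choose (m - k) : ℝ) / ((N - m).choose (m - l) : ℝ)) atTop (nhds 0) :=
    (tendsto_choose_div_choose_nhds_zero (by omega)).comp (tendsto_sub_atTop_nat m)
  have hpow := (continuousAt_const_rpow (by linarith : 1 - a ≠ 0)).tendsto.comp hexponent
  simpa using hpow.const_sub 1

theorem stmt_3 (m l k : ℕ) (hlm : l ≤ m) (hlk : l < k) (hkm : k ≤ m)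
    (a : ℝ) (ha0 : 0 < a) (ha1 : a < 1) :
    Tendsto (fun N : ℕ =>
        1 - (1 - a) ^ (((N - m).choose (m - k) : ℝ) / ((N - m).choose (m - l) : ℝ)))
      atTop (nhds 0) :=
  stmt_3_general m l k hlk hkm a ha1
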